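/- arXiv:2010.10599 — 4 statements merged into one kernel-verified Lean document; each statement's English description precedes it below -/
import Mathlib

section
/- Let n ≥ 1 with n ≡ 1 (mod 4) and s = (n+1)/2. In the ring A = (Z/2)[x,c,d]/⟨x², c² + cx, d^(n+1)⟩, the identity d^s · (cx + d)^s = d^n · c · x holds, and d^n · c · x ≠ 0 in A. -/
open MvPolynomial

/-- The mod 2 cohomology ring of the Wall manifold `Q(1,n)`:
`(ℤ/2)[x,c,d]/⟨x², c² + cx, d^(n+1)⟩`, where `x = X 0`, `c = X 1`, `d = X 2`. -/
noncomputable abbrev Q1nCohomology (n : ℕ) : Type :=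
  MvPolynomial (Fin 3) (ZMod 2) ⧸
    (Ideal.span {(X 0 : MvPolynomial (Fin 3) (ZMod 2)) ^ 2,
      (X 1) ^ 2 + (X 1) * (X 0), (X 2) ^ (n + 1)})

noncomputable def qx (n : ℕ) : Q1nCohomology n := Ideal.Quotient.mk _ (X 0)
noncomputable def qc (n : ℕ) : Q1nCohomology n := Ideal.Quotient.mk _ (X 1)
noncomputable def qd (n : ℕ) : Q1nCohomology n := Ideal.Quotient.mk _ (X 2)

lemma wall_not_mem (n : ℕ) :
    (X 0 * X 1 * X 2 ^ n : MvPolynomial (Fin 3) (ZMod 2)) ∉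
      Ideal.span {(X 0 : MvPolynomial (Fin 3) (ZMod 2)) ^ 2,
        (X 1) ^ 2 + (X 1) * (X 0), (X 2) ^ (n + 1)} := by
  intro hmem
  set μ₁ : Fin 3 →₀ ℕ :=
    Finsupp.single 0 1 + Finsupp.single 1 1 + Finsupp.single 2 n with hμ₁
  set μ₂ : Fin 3 →₀ ℕ := Finsupp.single 1 2 + Finsupp.single 2 n with hμ₂
  -- representation of the membership
  rw [Ideal.mem_span_insert] at hmem
  obtain ⟨a, z, hz, hrep⟩ := hmem
  rw [Ideal.mem_span_pair] at hz
  obtain ⟨u, v, huv⟩ := hz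
  -- rewrite generators as (sums of) monomials
  have h1 : (X 0 : MvPolynomial (Fin 3) (ZMod 2)) ^ 2
      = monomial (Finsupp.single 0 2) 1 := X_pow_eq_monomial
  have h2 : ((X 1) ^ 2 + (X 1) * (X 0) : MvPolynomial (Fin 3) (ZMod 2))
      = monomial (Finsupp.single 1 2) 1
        + monomial (Finsupp.single 1 1 + Finsupp.single 0 1) 1 := by
    rw [X_pow_eq_monomial]
    congr 1
    rw [X, X, monomial_mul, mul_one]
  have h3 : ((X 2) ^ (n + 1) : MvPolynomial (Fin 3) (ZMod 2))
      = monomial (Finsupp.single 2 (n + 1)) 1 := X_pow_eq_monomial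
  have hp : (X 0 * X 1 * X 2 ^ n : MvPolynomial (Fin 3) (ZMod 2))
      = monomial μ₁ 1 := by
    rw [X_pow_eq_monomial, X, X, monomial_mul, monomial_mul, mul_one, mul_one]
  -- Finsupp facts
  have f1 : ¬ (Finsupp.single 0 2 : Fin 3 →₀ ℕ) ≤ μ₁ := by
    rw [Finsupp.le_def]; push_neg
    exact ⟨0, by simp [hμ₁, Finsupp.single_apply]⟩
  have f2 : ¬ (Finsupp.single 0 2 : Fin 3 →₀ ℕ) ≤ μ₂ := by
    rw [Finsupp.le_def]; push_neg
    exact ⟨0, by simp [hμ₂, Finsupp.single_apply]⟩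
  have f3 : ¬ (Finsupp.single 1 2 : Fin 3 →₀ ℕ) ≤ μ₁ := by
    rw [Finsupp.le_def]; push_neg
    exact ⟨1, by simp [hμ₁, Finsupp.single_apply]⟩
  have f4 : (Finsupp.single 1 2 : Fin 3 →₀ ℕ) ≤ μ₂ := by
    rw [Finsupp.le_def]
    intro i
    fin_cases i <;> simp [hμ₂, Finsupp.single_apply]
  have f4' : μ₂ - Finsupp.single 1 2 = Finsupp.single 2 n := by
    ext i
    fin_cases i <;> simp [hμ₂, Finsupp.single_apply]
  have f5 : (Finsupp.single 1 1 + Finsupp.single 0 1 : Fin 3 →₀ ℕ) ≤ μ₁ := by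
    rw [Finsupp.le_def]
    intro i
    fin_cases i <;> simp [hμ₁, Finsupp.single_apply]
  have f5' : μ₁ - (Finsupp.single 1 1 + Finsupp.single 0 1) = Finsupp.single 2 n := by
    ext i
    fin_cases i <;> simp [hμ₁, Finsupp.single_apply]
  have f6 : ¬ (Finsupp.single 1 1 + Finsupp.single 0 1 : Fin 3 →₀ ℕ) ≤ μ₂ := by
    rw [Finsupp.le_def]; push_neg
    exact ⟨0, by simp [hμ₂, Finsupp.single_apply]⟩
  have f7 : ¬ (Finsupp.single 2 (n + 1) : Fin 3 →₀ ℕ) ≤ μ₁ := by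
    rw [Finsupp.le_def]; push_neg
    exact ⟨2, by simp [hμ₁, Finsupp.single_apply]⟩
  have f8 : ¬ (Finsupp.single 2 (n + 1) : Fin 3 →₀ ℕ) ≤ μ₂ := by
    rw [Finsupp.le_def]; push_neg
    exact ⟨2, by simp [hμ₂, Finsupp.single_apply]⟩
  have fne : μ₁ ≠ μ₂ := by
    intro h
    have := congrFun (congrArg (fun f : Fin 3 →₀ ℕ => (f : Fin 3 → ℕ)) h) 0
    simp [hμ₁, hμ₂, Finsupp.single_apply] at this
  -- apply the functional `coeff μ₁ + coeff μ₂` to the representation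
  have happ := congrArg (fun p => coeff μ₁ p + coeff μ₂ p) hrep
  simp only [hp, ← huv, h1, h2, h3, coeff_add, coeff_mul_monomial', mul_add,
    coeff_monomial, if_pos f4, if_pos f5, if_neg f1, if_neg f2, if_neg f3,
    if_neg f6, if_neg f7, if_neg f8, f4', f5', if_pos rfl, if_neg fne,
    if_neg (Ne.symm fne)] at happ
  simp [CharTwo.add_self_eq_zero] at happ
  
/-- For `n ≡ 1 (mod 4)`, `n ≥ 1`, and `s = (n+1)/2`, in
`H^*(Q(1,n); ℤ/2)` one has `d^s (cx + d)^s = d^n c x ≠ 0`. -/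
theorem stmt2 (n s : ℕ) (hn : 1 ≤ n) (hmod : n % 4 = 1) (hs : s = (n + 1) / 2) :
    (qd n) ^ s * (qc n * qx n + qd n) ^ s = (qd n) ^ n * qc n * qx n ∧
      (qd n) ^ n * qc n * qx n ≠ 0 := by
  obtain ⟨k, rfl⟩ : ∃ k, n = 4 * k + 1 := ⟨n / 4, by omega⟩
  obtain rfl : s = 2 * k + 1 := by omega
  set N := 4 * k + 1 with hN
  -- basic relations in the quotient ring
  have hx2 : qx N ^ 2 = 0 := by
    rw [qx, ← map_pow, Ideal.Quotient.eq_zero_iff_mem]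
    exact Ideal.subset_span (by simp)
  have hcr : qc N ^ 2 + qc N * qx N = 0 := by
    rw [qc, qx, ← map_pow, ← map_mul, ← map_add, Ideal.Quotient.eq_zero_iff_mem]
    exact Ideal.subset_span (by simp)
  have hd : qd N ^ (N + 1) = 0 := by
    rw [qd, ← map_pow, Ideal.Quotient.eq_zero_iff_mem]
    exact Ideal.subset_span (by simp)
  have h2 : (2 : Q1nCohomology N) = 0 := by
    have h : (2 : MvPolynomial (Fin 3) (ZMod 2)) = C (2 : ZMod 2) := (map_ofNat C 2).symm
    calc (2 : Q1nCohomology N)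
        = Ideal.Quotient.mk _ (2 : MvPolynomial (Fin 3) (ZMod 2)) := (map_ofNat _ 2).symm
      _ = 0 := by rw [h, show (2 : ZMod 2) = 0 from rfl, map_zero, map_zero]
  constructor
  · have hsq : (qc N * qx N + qd N) ^ 2 = qd N ^ 2 := by
      linear_combination (qc N ^ 2) * hx2 + (qc N * qx N * qd N) * h2
    have hpow : (qc N * qx N + qd N) ^ (2 * k + 1)
        = (qc N * qx N + qd N) * (qd N ^ 2) ^ k := by
      rw [pow_succ', pow_mul, hsq]
    rw [hpow]
    have : qd N ^ (N + 1) = 0 := hd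
    rw [hN] at this ⊢
    linear_combination this
  · intro h0
    have : (qd (4 * k + 1)) ^ (4 * k + 1) * qc (4 * k + 1) * qx (4 * k + 1)
        = Ideal.Quotient.mk _ (X 0 * X 1 * X 2 ^ (4 * k + 1) :
            MvPolynomial (Fin 3) (ZMod 2)) := by
      rw [qd, qc, qx, ← map_pow, ← map_mul, ← map_mul]
      congr 1
      ring
    rw [this, Ideal.Quotient.eq_zero_iff_mem] at h0
    exact wall_not_mem _ h0
end

section
/- Let n ≥ 1 and A = (Z/2)[x,c,d]/⟨x², c² + cx, d^(n+1)⟩, graded with deg x = deg c = 1 and deg d = 2. Then for 0 ≤ k ≤ n, the degree-(2k+1) homogeneous component of A has dimension 2 over Z/2 (spanned by c·d^k and x·d^k), for 1 ≤ k ≤ n the degree-2k component has dimension 2 (spanned by d^k and c²·d^(k-1)), the degree-(2n+2) component is 1-dimensional spanned by c²·d^n, and all components in degree greater than 2n+2 vanish. -/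
open MvPolynomial

/-- The degree-`j` homogeneous component of `H^*(Q(1,n))`, for the grading with
`deg x = deg c = 1`, `deg d = 2`: the span of the images of the monomials of
weighted degree `j`. -/
noncomputable def Q1nComp (n j : ℕ) : Submodule (ZMod 2) (Q1nCohomology n) :=
  Submodule.span (ZMod 2)
    {y | ∃ s : Fin 3 →₀ ℕ, s 0 + s 1 + 2 * s 2 = j ∧
      y = Ideal.Quotient.mk _ (monomial s (1 : ZMod 2))}

/-!
Every monomial `x^a c^b d^e` is zero in `A` or equal to one of `d^e, x d^e, c d^e, c² d^e` with
`e ≤ n`, since the relations give `x² = 0`, `x c = c²`, `x c² = c x² = 0`, `c³ = c² x = 0` and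
`d^(n+1) = 0`; this gives the spanning sets. For independence, send each monomial of
`𝔽₂[x,c,d]` to its reduction: the resulting linear map kills the relation ideal (for a monomial `r`
the two terms of `r (c² + c x)` reduce to the same monomial, which cancels in characteristic 2) and
fixes the reduced monomials, so their images in `A` stay linearly independent.
-/

theorem Ideal.Quotient.linearIndependent_mk_pair {K R M : Type*} [CommRing K] [CommRing R]
    [Algebra K R] [AddCommGroup M] [Module K M] {I : Ideal R} (L : R →ₗ[K] M)
    (hL : ∀ p ∈ I, L p = 0) {p q : R} (h : LinearIndependent K ![L p, L q]) :
    LinearIndependent K ![Ideal.Quotient.mk I p, Ideal.Quotient.mk I q] := by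
  rw [LinearIndependent.pair_iff] at h ⊢
  intro s t hst
  refine h s t ?_
  have hmem : s • p + t • q ∈ I := by
    rwa [← Ideal.Quotient.eq_zero_iff_mem, ← Ideal.Quotient.mkₐ_eq_mk K, map_add, map_smul,
      map_smul, Ideal.Quotient.mkₐ_eq_mk]
  simpa using hL _ hmem

theorem finrank_span_pair {K M : Type*} [Ring K] [Nontrivial K] [StrongRankCondition K]
    [AddCommGroup M] [Module K M] {u v : M}
    (h : LinearIndependent K ![u, v]) : Module.finrank K (Submodule.span K {u, v}) = 2 := by
  have hrange : Set.range ![u, v] = {u, v} := by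
    rw [Matrix.range_cons, Matrix.range_cons, Matrix.range_empty, Set.union_empty,
      Set.singleton_union, Set.insert_eq]
  have := finrank_span_eq_card h
  rwa [hrange, Fintype.card_fin] at this

theorem MvPolynomial.linearIndependent_monomial_pair {σ K : Type*} [CommSemiring K] {s t : σ →₀ ℕ}
    (h : s ≠ t) : LinearIndependent K ![monomial s (1 : K), monomial t 1] := by
  have hinj : Function.Injective ![s, t] := by
    intro i j
    fin_cases i <;> fin_cases j <;> simp [h, h.symm]
  convert (basisMonomials σ K).linearIndependent.comp _ hinj using 1
  ext i
  fin_cases i <;> simp [coe_basisMonomials]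

namespace Q1nCohomology

local notation "𝔽₂[x,c,d]" => MvPolynomial (Fin 3) (ZMod 2)

noncomputable abbrev relations (n : ℕ) : Ideal 𝔽₂[x,c,d] :=
  Ideal.span {X 0 ^ 2, X 1 ^ 2 + X 1 * X 0, X 2 ^ (n + 1)}

variable {n : ℕ}

theorem qx_sq : qx n ^ 2 = 0 := by
  rw [qx, ← map_pow, Ideal.Quotient.eq_zero_iff_mem]
  exact Ideal.subset_span (by simp)

theorem qc_sq : qc n ^ 2 = qc n * qx n := by
  rw [← sub_eq_zero, qc, qx, ← map_pow, ← map_mul, ← map_sub, Ideal.Quotient.eq_zero_iff_mem,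
    CharTwo.sub_eq_add]
  exact Ideal.subset_span (by simp)

theorem qd_pow_succ : qd n ^ (n + 1) = 0 := by
  rw [qd, ← map_pow, Ideal.Quotient.eq_zero_iff_mem]
  exact Ideal.subset_span (by simp)

theorem qx_pow_eq_zero {a : ℕ} (ha : 2 ≤ a) : qx n ^ a = 0 := by
  rw [← Nat.sub_add_cancel ha, pow_add, qx_sq, mul_zero]

theorem qd_pow_eq_zero {e : ℕ} (he : n < e) : qd n ^ e = 0 := by
  rw [← Nat.sub_add_cancel he, pow_add, qd_pow_succ, mul_zero]

theorem qx_mul_qc_sq : qx n * qc n ^ 2 = 0 := by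
  rw [qc_sq, mul_left_comm, ← sq, qx_sq, mul_zero]

theorem qc_pow_three : qc n ^ 3 = 0 := by
  linear_combination qc n * qc_sq + qx_mul_qc_sq

theorem qc_pow_eq_zero {b : ℕ} (hb : 3 ≤ b) : qc n ^ b = 0 := by
  rw [← Nat.sub_add_cancel hb, pow_add, qc_pow_three, mul_zero]

/-- `x^a c^b d^e` is one of the monomials `d^e, x d^e, c d^e, c² d^e` with `e ≤ n`. -/
abbrev IsNormal (n a b e : ℕ) : Prop := e ≤ n ∧ (a = 0 ∧ b ≤ 2 ∨ a = 1 ∧ b = 0)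

theorem monomial_eq_zero_or_isNormal (a b e : ℕ) :
    qx n ^ a * qc n ^ b * qd n ^ e = 0 ∨ IsNormal n a b e ∨
      IsNormal n 0 2 e ∧ a + b = 2 ∧ qx n ^ a * qc n ^ b * qd n ^ e = qc n ^ 2 * qd n ^ e := by
  rcases lt_or_ge n e with he | he
  · simp [qd_pow_eq_zero he]
  rcases le_or_gt 2 a with ha | ha
  · simp [qx_pow_eq_zero ha]
  rcases le_or_gt 3 b with hb | hb
  · simp [qc_pow_eq_zero hb]
  obtain ⟨rfl, rfl⟩ | ⟨rfl, rfl⟩ | hab :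
      a = 1 ∧ b = 1 ∨ a = 1 ∧ b = 2 ∨ a = 0 ∧ b ≤ 2 ∨ a = 1 ∧ b = 0 := by omega
  · refine Or.inr (Or.inr ⟨⟨he, by omega⟩, rfl, ?_⟩)
    rw [pow_one, pow_one, mul_comm (qx n), ← qc_sq]
  · exact Or.inl (by rw [pow_one, qx_mul_qc_sq, zero_mul])
  · exact Or.inr (Or.inl ⟨he, hab⟩)

noncomputable def exponent (a b e : ℕ) : Fin 3 →₀ ℕ :=
  Finsupp.single 0 a + Finsupp.single 1 b + Finsupp.single 2 e

theorem mk_monomial (s : Fin 3 →₀ ℕ) :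
    Ideal.Quotient.mk (relations n) (monomial s 1) = qx n ^ s 0 * qc n ^ s 1 * qd n ^ s 2 := by
  rw [monomial_eq, Finsupp.prod_fintype _ _ (by simp), Fin.prod_univ_three]
  simp [qx, qc, qd]

theorem mk_monomial_exponent (a b e : ℕ) :
    Ideal.Quotient.mk (relations n) (monomial (exponent a b e) 1) =
      qx n ^ a * qc n ^ b * qd n ^ e := by
  simp [mk_monomial, exponent]

theorem monomial_mem_q1nComp (a b e : ℕ) {j : ℕ} (h : a + b + 2 * e = j) :
    qx n ^ a * qc n ^ b * qd n ^ e ∈ Q1nComp n j :=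
  Submodule.subset_span ⟨exponent a b e, by simpa [exponent] using h,
    (mk_monomial_exponent a b e).symm⟩

theorem q1nComp_le_span {j : ℕ} {S : Set (Q1nCohomology n)}
    (hS : ∀ a b e, IsNormal n a b e → a + b + 2 * e = j → qx n ^ a * qc n ^ b * qd n ^ e ∈ S) :
    Q1nComp n j ≤ Submodule.span (ZMod 2) S := by
  rw [Q1nComp, Submodule.span_le]
  rintro _ ⟨s, hs, rfl⟩
  rw [mk_monomial]
  rcases monomial_eq_zero_or_isNormal (s 0) (s 1) (s 2) with h0 | hN | ⟨hN, hab, heq⟩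
  · rw [h0]
    exact Submodule.zero_mem _
  · exact Submodule.subset_span (hS _ _ _ hN hs)
  · rw [heq]
    simpa using Submodule.subset_span (hS 0 2 (s 2) hN (by omega))

noncomputable def reduce (n a b e : ℕ) : 𝔽₂[x,c,d] :=
  if IsNormal n a b e then monomial (exponent a b e) 1
  else if e ≤ n ∧ a = 1 ∧ b = 1 then monomial (exponent 0 2 e) 1
  else 0

theorem reduce_x_add_two (a b e : ℕ) : reduce n (a + 2) b e = 0 := by
  simp [reduce]

theorem reduce_c_add_two (a b e : ℕ) :
    reduce n a (b + 2) e = reduce n (a + 1) (b + 1) e := by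
  unfold reduce
  by_cases hab : a = 0 ∧ b = 0
  · obtain ⟨rfl, rfl⟩ := hab
    simp [IsNormal]
  · rw [if_neg (by omega), if_neg (by omega), if_neg (by omega), if_neg (by omega)]

theorem reduce_of_lt {e : ℕ} (a b : ℕ) (he : n < e) : reduce n a b e = 0 := by
  unfold reduce
  split_ifs <;> first | rfl | omega

noncomputable def normalForm (n : ℕ) : 𝔽₂[x,c,d] →ₗ[ZMod 2] 𝔽₂[x,c,d] :=
  (basisMonomials (Fin 3) (ZMod 2)).constr (ZMod 2) fun s => reduce n (s 0) (s 1) (s 2)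

theorem normalForm_monomial (s : Fin 3 →₀ ℕ) :
    normalForm n (monomial s 1) = reduce n (s 0) (s 1) (s 2) := by
  rw [normalForm]
  convert (basisMonomials (Fin 3) (ZMod 2)).constr_basis (ZMod 2) _ s
  rw [coe_basisMonomials]

theorem normalForm_mul_eq_zero {g : 𝔽₂[x,c,d]}
    (hg : g ∈ ({X 0 ^ 2, X 1 ^ 2 + X 1 * X 0, X 2 ^ (n + 1)} : Set 𝔽₂[x,c,d])) (r : 𝔽₂[x,c,d]) :
    normalForm n (r * g) = 0 := by
  suffices normalForm n ∘ₗ LinearMap.mulRight (ZMod 2) g = 0 from LinearMap.congr_fun this r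
  refine (basisMonomials (Fin 3) (ZMod 2)).ext fun s => ?_
  simp only [LinearMap.comp_apply, LinearMap.mulRight_apply, coe_basisMonomials,
    LinearMap.zero_apply]
  rcases hg with rfl | rfl | rfl
  · rw [X_pow_eq_monomial, monomial_mul, one_mul, normalForm_monomial]
    simp [reduce_x_add_two]
  · rw [X_pow_eq_monomial, X, X, monomial_mul, mul_add, monomial_mul, monomial_mul, one_mul,
      one_mul, map_add, normalForm_monomial, normalForm_monomial]
    simp [reduce_c_add_two, CharTwo.add_self_eq_zero]
  · rw [X_pow_eq_monomial, monomial_mul, one_mul, normalForm_monomial]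
    exact reduce_of_lt _ _ (by simp only [Finsupp.add_apply, Finsupp.single_eq_same]; omega)

theorem normalForm_eq_zero_of_mem {p : 𝔽₂[x,c,d]} (hp : p ∈ relations n) :
    normalForm n p = 0 := by
  obtain ⟨r₁, q, hq, rfl⟩ := Ideal.mem_span_insert.1 hp
  obtain ⟨r₂, q', hq', rfl⟩ := Ideal.mem_span_insert.1 hq
  obtain ⟨r₃, rfl⟩ := Ideal.mem_span_singleton'.1 hq'
  rw [map_add, map_add, normalForm_mul_eq_zero (by simp), normalForm_mul_eq_zero (by simp),
    normalForm_mul_eq_zero (by simp), add_zero, add_zero]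

theorem normalForm_monomial_exponent {a b e : ℕ} (h : IsNormal n a b e) :
    normalForm n (monomial (exponent a b e) 1) = monomial (exponent a b e) 1 := by
  rw [normalForm_monomial]
  simp [exponent, reduce, h]

theorem linearIndependent_pair {a b e a' b' e' : ℕ} (h : IsNormal n a b e)
    (h' : IsNormal n a' b' e') (hne : (a, b, e) ≠ (a', b', e')) :
    LinearIndependent (ZMod 2)
      ![qx n ^ a * qc n ^ b * qd n ^ e, qx n ^ a' * qc n ^ b' * qd n ^ e'] := by
  rw [← mk_monomial_exponent, ← mk_monomial_exponent]
  refine Ideal.Quotient.linearIndependent_mk_pair (normalForm n)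
    (fun _ => normalForm_eq_zero_of_mem) ?_
  rw [normalForm_monomial_exponent h, normalForm_monomial_exponent h']
  refine linearIndependent_monomial_pair fun heq => hne ?_
  have h0 := DFunLike.congr_fun heq 0
  have h1 := DFunLike.congr_fun heq 1
  have h2 := DFunLike.congr_fun heq 2
  simp only [exponent, Finsupp.add_apply, Finsupp.single_apply] at h0 h1 h2
  simp_all

theorem ne_zero_of_isNormal {a b e : ℕ} (h : IsNormal n a b e) :
    qx n ^ a * qc n ^ b * qd n ^ e ≠ 0 := by
  rw [← mk_monomial_exponent, Ne, Ideal.Quotient.eq_zero_iff_mem]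
  intro hmem
  have := normalForm_eq_zero_of_mem hmem
  rw [normalForm_monomial_exponent h] at this
  exact one_ne_zero ((monomial_eq_zero).1 this)

end Q1nCohomology

section

open Q1nCohomology

variable {n : ℕ}

theorem q1nComp_odd_eq_span {k : ℕ} :
    Q1nComp n (2 * k + 1) = Submodule.span (ZMod 2) {qc n * qd n ^ k, qx n * qd n ^ k} := by
  refine le_antisymm (q1nComp_le_span ?_) (Submodule.span_le.2 ?_)
  · rintro a b e ⟨-, ⟨rfl, hb⟩ | ⟨rfl, rfl⟩⟩ hj
    · obtain ⟨rfl, rfl⟩ : b = 1 ∧ e = k := by omega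
      simp
    · obtain rfl : e = k := by omega
      simp
  · rintro _ (rfl | rfl)
    · simpa using monomial_mem_q1nComp (n := n) 0 1 k (by ring)
    · simpa using monomial_mem_q1nComp (n := n) 1 0 k (by ring)

theorem finrank_q1nComp_odd {k : ℕ} (hk : k ≤ n) :
    Module.finrank (ZMod 2) (Q1nComp n (2 * k + 1)) = 2 := by
  rw [q1nComp_odd_eq_span]
  apply finrank_span_pair
  simpa using linearIndependent_pair (n := n) (a := 0) (b := 1) (e := k) (a' := 1) (b' := 0)
    (e' := k) ⟨hk, by omega⟩ ⟨hk, by omega⟩ (by simp)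

theorem q1nComp_even_eq_span {k : ℕ} (hk : 1 ≤ k) :
    Q1nComp n (2 * k) = Submodule.span (ZMod 2) {qd n ^ k, qc n ^ 2 * qd n ^ (k - 1)} := by
  refine le_antisymm (q1nComp_le_span ?_) (Submodule.span_le.2 ?_)
  · rintro a b e ⟨-, ⟨rfl, hb⟩ | ⟨rfl, rfl⟩⟩ hj
    · interval_cases b
      · obtain rfl : e = k := by omega
        simp
      · omega
      · obtain rfl : e = k - 1 := by omega
        simp
    · omega
  · rintro _ (rfl | rfl)
    · simpa using monomial_mem_q1nComp (n := n) 0 0 k (by ring)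
    · simpa using monomial_mem_q1nComp (n := n) 0 2 (k - 1) (by omega)

theorem finrank_q1nComp_even {k : ℕ} (hk1 : 1 ≤ k) (hk : k ≤ n) :
    Module.finrank (ZMod 2) (Q1nComp n (2 * k)) = 2 := by
  rw [q1nComp_even_eq_span hk1]
  apply finrank_span_pair
  simpa using linearIndependent_pair (n := n) (a := 0) (b := 0) (e := k) (a' := 0) (b' := 2)
    (e' := k - 1) ⟨hk, by omega⟩ ⟨by omega, by omega⟩ (by simp)

theorem q1nComp_top_eq_span :
    Q1nComp n (2 * n + 2) = Submodule.span (ZMod 2) {qc n ^ 2 * qd n ^ n} := by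
  refine le_antisymm (q1nComp_le_span ?_) (Submodule.span_le.2 ?_)
  · rintro a b e ⟨he, ⟨rfl, hb⟩ | ⟨rfl, rfl⟩⟩ hj
    · obtain ⟨rfl, rfl⟩ : b = 2 ∧ e = n := by omega
      simp
    · omega
  · rintro _ rfl
    simpa using monomial_mem_q1nComp (n := n) 0 2 n (by ring)

theorem finrank_q1nComp_top : Module.finrank (ZMod 2) (Q1nComp n (2 * n + 2)) = 1 := by
  have hne := ne_zero_of_isNormal (n := n) (a := 0) (b := 2) (e := n) ⟨le_rfl, by omega⟩
  rw [q1nComp_top_eq_span]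
  exact finrank_span_singleton (by simpa using hne)

theorem q1nComp_eq_bot {j : ℕ} (hj : 2 * n + 2 < j) : Q1nComp n j = ⊥ := by
  rw [eq_bot_iff, ← Submodule.span_empty]
  exact q1nComp_le_span fun a b e ⟨he, hab⟩ hdeg => by omega

end

theorem stmt4_general (n : ℕ) :
    (∀ k, k ≤ n →
      Q1nComp n (2 * k + 1) =
        Submodule.span (ZMod 2) {qc n * (qd n) ^ k, qx n * (qd n) ^ k} ∧
      Module.finrank (ZMod 2) (Q1nComp n (2 * k + 1)) = 2) ∧
    (∀ k, 1 ≤ k → k ≤ n →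
      Q1nComp n (2 * k) =
        Submodule.span (ZMod 2) {(qd n) ^ k, (qc n) ^ 2 * (qd n) ^ (k - 1)} ∧
      Module.finrank (ZMod 2) (Q1nComp n (2 * k)) = 2) ∧
    (Q1nComp n (2 * n + 2) =
        Submodule.span (ZMod 2) {(qc n) ^ 2 * (qd n) ^ n} ∧
      Module.finrank (ZMod 2) (Q1nComp n (2 * n + 2)) = 1) ∧
    (∀ j, 2 * n + 2 < j → Q1nComp n j = ⊥) :=
  ⟨fun _ hk => ⟨q1nComp_odd_eq_span, finrank_q1nComp_odd hk⟩,
    fun _ hk1 hk => ⟨q1nComp_even_eq_span hk1, finrank_q1nComp_even hk1 hk⟩,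
    ⟨q1nComp_top_eq_span, finrank_q1nComp_top⟩, fun _ hj => q1nComp_eq_bot hj⟩

/-- Additive structure of `H^*(Q(1,n); ℤ/2)`, `n ≥ 1`: the odd components
`H^(2k+1)` (`0 ≤ k ≤ n`) are 2-dimensional spanned by `c d^k, x d^k`; the even
components `H^(2k)` (`1 ≤ k ≤ n`) are 2-dimensional spanned by `d^k, c² d^(k-1)`;
the top component `H^(2n+2)` is 1-dimensional spanned by `c² d^n`; and all
components above degree `2n+2` vanish. -/
theorem stmt4 (n : ℕ) (hn : 1 ≤ n) :
    (∀ k, k ≤ n →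
      Q1nComp n (2 * k + 1) =
        Submodule.span (ZMod 2) {qc n * (qd n) ^ k, qx n * (qd n) ^ k} ∧
      Module.finrank (ZMod 2) (Q1nComp n (2 * k + 1)) = 2) ∧
    (∀ k, 1 ≤ k → k ≤ n →
      Q1nComp n (2 * k) =
        Submodule.span (ZMod 2) {(qd n) ^ k, (qc n) ^ 2 * (qd n) ^ (k - 1)} ∧
      Module.finrank (ZMod 2) (Q1nComp n (2 * k)) = 2) ∧
    (Q1nComp n (2 * n + 2) =
        Submodule.span (ZMod 2) {(qc n) ^ 2 * (qd n) ^ n} ∧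
      Module.finrank (ZMod 2) (Q1nComp n (2 * n + 2)) = 1) ∧
    (∀ j, 2 * n + 2 < j → Q1nComp n j = ⊥) :=
  stmt4_general n
end

section
/- Let n ≥ 3 be odd, and let B = (Z/2)[α,β,γ,δ]/⟨α³, β³, γ², β² + βγ, δ^((n+1)/2)⟩ be graded with deg α = deg β = deg γ = 1 and deg δ = 4. Then the top nonzero degree of B is 2n + 2, and the degree-(2n+2) component is 1-dimensional spanned by δ^((n-1)/2) · α² · β². -/
open MvPolynomial

/-- The mod 2 cohomology ring of the orbit space `Q(1,n)/ℤ₂`: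
`(ℤ/2)[α,β,γ,δ]/⟨α³, β³, γ², β² + βγ, δ^((n+1)/2)⟩`, where
`α = X 0`, `β = X 1`, `γ = X 2`, `δ = X 3`. -/
noncomputable abbrev OrbitCohomology (n : ℕ) : Type :=
  MvPolynomial (Fin 4) (ZMod 2) ⧸
    (Ideal.span {(X 0 : MvPolynomial (Fin 4) (ZMod 2)) ^ 3,
      (X 1) ^ 3, (X 2) ^ 2, (X 1) ^ 2 + (X 1) * (X 2),
      (X 3) ^ ((n + 1) / 2)})

noncomputable def oα (n : ℕ) : OrbitCohomology n := Ideal.Quotient.mk _ (X 0)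
noncomputable def oβ (n : ℕ) : OrbitCohomology n := Ideal.Quotient.mk _ (X 1)
noncomputable def oγ (n : ℕ) : OrbitCohomology n := Ideal.Quotient.mk _ (X 2)
noncomputable def oδ (n : ℕ) : OrbitCohomology n := Ideal.Quotient.mk _ (X 3)

/-- Degree-`j` homogeneous component of the orbit-space cohomology ring, for
the grading with `deg α = deg β = deg γ = 1` and `deg δ = 4`. -/
noncomputable def OrbitComp (n j : ℕ) : Submodule (ZMod 2) (OrbitCohomology n) :=
  Submodule.span (ZMod 2)
    {y | ∃ s : Fin 4 →₀ ℕ, s 0 + s 1 + s 2 + 4 * s 3 = j ∧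
      y = Ideal.Quotient.mk _ (monomial s (1 : ZMod 2))}

/-!
Modulo the relations, every monomial `α^a β^b γ^c δ^d` with `a ≥ 3`, `b ≥ 3`, `c ≥ 2` or
`d ≥ (n + 1) / 2` vanishes, which bounds the degree of a surviving monomial by `2n + 3`. In
characteristic two `β² + βγ = 0` reads `β² = βγ`, so `β²γ = βγ² = 0`: this kills the only
candidate `α²β²γδ^d` of degree `2n + 3` and, in degree `2n + 2`, kills `αβ²γδ^d` and identifies
`α²βγδ^d` with `α²β²δ^d`, where `d = (n - 1) / 2`.

That `α²β²δ^d ≠ 0` is witnessed by the functional "coefficient of `α²β²δ^d` plus coefficient of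
`α²βγδ^d`", which vanishes on the whole ideal: a multiple of `β² + βγ` contributes the same
coefficient to both monomials, and multiples of the other generators contribute to neither.
-/

noncomputable section

namespace OrbitCohomology

section IdealInKer

variable {R M : Type*} [CommRing R] [AddCommMonoid M]

def idealInKer (L : R →+ M) : Ideal R where
  carrier := {f | ∀ q, L (q * f) = 0}
  zero_mem' q := by simp
  add_mem' {f g} hf hg q := by simp only [mul_add, map_add, hf q, hg q, add_zero]
  smul_mem' r f hf q := by simpa only [smul_eq_mul, ← mul_assoc] using hf (q * r)

lemma apply_eq_zero_of_mem_idealInKer {L : R →+ M} {f : R} (hf : f ∈ idealInKer L) : L f = 0 := by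
  simpa using hf 1

end IdealInKer

abbrev P : Type := MvPolynomial (Fin 4) (ZMod 2)

-- `OrbitCohomology n` is `P ⧸ orbitIdeal ((n + 1) / 2)` by definition.
def orbitIdeal (m : ℕ) : Ideal P :=
  Ideal.span {X 0 ^ 3, X 1 ^ 3, X 2 ^ 2, X 1 ^ 2 + X 1 * X 2, X 3 ^ m}

def expVec (a b c d : ℕ) : Fin 4 →₀ ℕ :=
  Finsupp.single 0 a + Finsupp.single 1 b + Finsupp.single 2 c + Finsupp.single 3 d

@[simp] lemma expVec_zero (a b c d : ℕ) : expVec a b c d 0 = a := by simp [expVec]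
@[simp] lemma expVec_one (a b c d : ℕ) : expVec a b c d 1 = b := by simp [expVec]
@[simp] lemma expVec_two (a b c d : ℕ) : expVec a b c d 2 = c := by simp [expVec]
@[simp] lemma expVec_three (a b c d : ℕ) : expVec a b c d 3 = d := by simp [expVec]

lemma expVec_add (a b c d a' b' c' d' : ℕ) :
    expVec a b c d + expVec a' b' c' d' = expVec (a + a') (b + b') (c + c') (d + d') := by
  ext i; fin_cases i <;> simp

lemma monomial_one_eq_prod_X_pow (s : Fin 4 →₀ ℕ) :
    (monomial s 1 : P) = X 0 ^ s 0 * X 1 ^ s 1 * X 2 ^ s 2 * X 3 ^ s 3 := by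
  rw [monomial_eq, C_1, one_mul, Finsupp.prod_fintype _ _ (fun _ ↦ pow_zero _),
    Fin.prod_univ_four]

lemma coeff_mul_X_pow_of_lt {s : Fin 4 →₀ ℕ} {i : Fin 4} {e : ℕ} (h : s i < e) (q : P) :
    coeff s (q * X i ^ e) = 0 := by
  rw [X_pow_eq_monomial, coeff_mul_monomial', if_neg]
  rw [Finsupp.single_le_iff]
  omega

def topFunctional (d : ℕ) : P →+ ZMod 2 :=
  (lcoeff (ZMod 2) (expVec 2 2 0 d) + lcoeff (ZMod 2) (expVec 2 1 1 d)).toAddMonoidHom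

lemma topFunctional_apply (d : ℕ) (f : P) :
    topFunctional d f = coeff (expVec 2 2 0 d) f + coeff (expVec 2 1 1 d) f := rfl

lemma X_pow_mem_idealInKer_topFunctional {d e : ℕ} {i : Fin 4}
    (h2 : expVec 2 2 0 d i < e) (h1 : expVec 2 1 1 d i < e) :
    X i ^ e ∈ idealInKer (topFunctional d) := fun q ↦ by
  rw [topFunctional_apply, coeff_mul_X_pow_of_lt h2, coeff_mul_X_pow_of_lt h1, add_zero]

lemma X_one_sq_add_mem_idealInKer_topFunctional (d : ℕ) :
    (X 1 ^ 2 + X 1 * X 2 : P) ∈ idealInKer (topFunctional d) := fun q ↦ by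
  have hβ : (X 1 ^ 2 : P) = monomial (expVec 0 2 0 0) 1 := by
    simp [monomial_one_eq_prod_X_pow]
  have hβγ : (X 1 * X 2 : P) = monomial (expVec 0 1 1 0) 1 := by
    simp [monomial_one_eq_prod_X_pow]
  have hcross₁ : coeff (expVec 2 2 0 d) (q * (X 1 * X 2)) = 0 := by
    rw [← mul_assoc, ← pow_one (X 2)]
    exact coeff_mul_X_pow_of_lt (by simp) _
  have hcross₂ : coeff (expVec 2 1 1 d) (q * X 1 ^ 2) = 0 := coeff_mul_X_pow_of_lt (by simp) _
  have hdiag₁ : coeff (expVec 2 2 0 d) (q * X 1 ^ 2) = coeff (expVec 2 0 0 d) q := by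
    simpa [hβ, expVec_add] using coeff_mul_monomial (expVec 2 0 0 d) (expVec 0 2 0 0) 1 q
  have hdiag₂ : coeff (expVec 2 1 1 d) (q * (X 1 * X 2)) = coeff (expVec 2 0 0 d) q := by
    simpa [hβγ, expVec_add] using coeff_mul_monomial (expVec 2 0 0 d) (expVec 0 1 1 0) 1 q
  rw [topFunctional_apply, mul_add, coeff_add, coeff_add, hcross₁, hcross₂, hdiag₁, hdiag₂,
    add_zero, zero_add, CharTwo.add_self_eq_zero]

lemma orbitIdeal_le_idealInKer_topFunctional {d m : ℕ} (h : d < m) :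
    orbitIdeal m ≤ idealInKer (topFunctional d) := by
  simp only [orbitIdeal, Ideal.span_le, Set.insert_subset_iff, Set.singleton_subset_iff,
    SetLike.mem_coe]
  refine ⟨?_, ?_, ?_, X_one_sq_add_mem_idealInKer_topFunctional d, ?_⟩ <;>
    exact X_pow_mem_idealInKer_topFunctional (by simp [h]) (by simp [h])

lemma monomial_top_not_mem_orbitIdeal {d m : ℕ} (h : d < m) :
    monomial (expVec 2 2 0 d) 1 ∉ orbitIdeal m := fun hmem ↦ by
  have := apply_eq_zero_of_mem_idealInKer (orbitIdeal_le_idealInKer_topFunctional h hmem)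
  rw [topFunctional_apply, coeff_monomial, coeff_monomial, if_pos rfl, if_neg] at this
  · exact one_ne_zero this
  · intro heq
    simpa using DFunLike.congr_fun heq 1

variable (n : ℕ)

lemma mk_monomial_one (s : Fin 4 →₀ ℕ) :
    (Ideal.Quotient.mk _ (monomial s 1) : OrbitCohomology n) =
      oα n ^ s 0 * oβ n ^ s 1 * oγ n ^ s 2 * oδ n ^ s 3 := by
  simp only [monomial_one_eq_prod_X_pow, map_mul, map_pow, oα, oβ, oγ, oδ]

lemma two_eq_zero : (2 : OrbitCohomology n) = 0 := by
  have h := map_ofNat (algebraMap (ZMod 2) (OrbitCohomology n)) 2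
  rwa [show (OfNat.ofNat 2 : ZMod 2) = 0 from rfl, map_zero, eq_comm] at h

lemma oα_pow_three : oα n ^ 3 = 0 :=
  (Ideal.Quotient.eq_zero_iff_mem).2 (Ideal.subset_span (by simp))

lemma oβ_pow_three : oβ n ^ 3 = 0 :=
  (Ideal.Quotient.eq_zero_iff_mem).2 (Ideal.subset_span (by simp))

lemma oγ_sq : oγ n ^ 2 = 0 :=
  (Ideal.Quotient.eq_zero_iff_mem).2 (Ideal.subset_span (by simp))

lemma oδ_pow : oδ n ^ ((n + 1) / 2) = 0 :=
  (Ideal.Quotient.eq_zero_iff_mem).2 (Ideal.subset_span (by simp))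

lemma oβ_sq : oβ n ^ 2 = oβ n * oγ n := by
  have h : oβ n ^ 2 + oβ n * oγ n = 0 :=
    (Ideal.Quotient.eq_zero_iff_mem).2 (Ideal.subset_span (by simp))
  linear_combination h - oβ n * oγ n * two_eq_zero n

lemma oβ_sq_mul_oγ : oβ n ^ 2 * oγ n = 0 := by
  linear_combination oγ n * oβ_sq n + oβ n * oγ_sq n

lemma monomial_eq_zero_of_not_lt {a b c d : ℕ}
    (h : ¬(a < 3 ∧ b < 3 ∧ c < 2 ∧ d < (n + 1) / 2)) :
    oα n ^ a * oβ n ^ b * oγ n ^ c * oδ n ^ d = 0 := by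
  simp only [not_and_or, not_lt] at h
  rcases h with h | h | h | h
  · simp [pow_eq_zero_of_le h (oα_pow_three n)]
  · simp [pow_eq_zero_of_le h (oβ_pow_three n)]
  · simp [pow_eq_zero_of_le h (oγ_sq n)]
  · simp [pow_eq_zero_of_le h (oδ_pow n)]

lemma monomial_eq_zero_of_degree_gt (hn : Odd n) {a b c d : ℕ}
    (hdeg : 2 * n + 2 < a + b + c + 4 * d) :
    oα n ^ a * oβ n ^ b * oγ n ^ c * oδ n ^ d = 0 := by
  by_cases hlt : a < 3 ∧ b < 3 ∧ c < 2 ∧ d < (n + 1) / 2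
  · obtain ⟨t, rfl⟩ := hn
    obtain ⟨rfl, rfl, rfl, rfl⟩ : a = 2 ∧ b = 2 ∧ c = 1 ∧ d = t := by omega
    linear_combination (oα _ ^ 2 * oδ _ ^ d) * oβ_sq_mul_oγ _
  · exact monomial_eq_zero_of_not_lt n hlt

lemma monomial_mem_span_top_of_degree_eq (hn : Odd n) {a b c d : ℕ}
    (hdeg : a + b + c + 4 * d = 2 * n + 2) :
    oα n ^ a * oβ n ^ b * oγ n ^ c * oδ n ^ d ∈
      Submodule.span (ZMod 2) {oδ n ^ ((n - 1) / 2) * oα n ^ 2 * oβ n ^ 2} := by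
  by_cases hlt : a < 3 ∧ b < 3 ∧ c < 2 ∧ d < (n + 1) / 2
  · obtain ⟨t, rfl⟩ := hn
    have hd : (2 * t + 1 - 1) / 2 = t := by omega
    rw [hd]
    obtain ⟨rfl, rfl, rfl, rfl⟩ | ⟨rfl, rfl, rfl, rfl⟩ | ⟨rfl, rfl, rfl, rfl⟩ :
        (a = 2 ∧ b = 2 ∧ c = 0 ∧ d = t) ∨ (a = 2 ∧ b = 1 ∧ c = 1 ∧ d = t) ∨
          (a = 1 ∧ b = 2 ∧ c = 1 ∧ d = t) := by omega
    · convert Submodule.mem_span_singleton_self _ using 1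
      ring
    · convert Submodule.mem_span_singleton_self _ using 1
      linear_combination (-(oα _ ^ 2 * oδ _ ^ d)) * oβ_sq _
    · convert Submodule.zero_mem _ using 1
      linear_combination (oα _ * oδ _ ^ d) * oβ_sq_mul_oγ _
  · rw [monomial_eq_zero_of_not_lt n hlt]
    exact Submodule.zero_mem _

lemma oδ_pow_mul_oα_sq_mul_oβ_sq_ne_zero (hn : Odd n) :
    oδ n ^ ((n - 1) / 2) * oα n ^ 2 * oβ n ^ 2 ≠ 0 := by
  have hmk := mk_monomial_one n (expVec 2 2 0 ((n - 1) / 2))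
  simp only [expVec_zero, expVec_one, expVec_two, expVec_three, pow_zero, mul_one] at hmk
  rw [mul_rotate, ← hmk, Ne, Ideal.Quotient.eq_zero_iff_mem]
  obtain ⟨t, rfl⟩ := hn
  exact monomial_top_not_mem_orbitIdeal (by omega)

lemma orbitComp_le_of_forall {j : ℕ} {N : Submodule (ZMod 2) (OrbitCohomology n)}
    (h : ∀ a b c d, a + b + c + 4 * d = j → oα n ^ a * oβ n ^ b * oγ n ^ c * oδ n ^ d ∈ N) :
    OrbitComp n j ≤ N := by
  rw [OrbitComp, Submodule.span_le]
  rintro _ ⟨s, hs, rfl⟩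
  rw [SetLike.mem_coe, mk_monomial_one]
  exact h _ _ _ _ hs

lemma monomial_mem_orbitComp {a b c d j : ℕ} (hdeg : a + b + c + 4 * d = j) :
    oα n ^ a * oβ n ^ b * oγ n ^ c * oδ n ^ d ∈ OrbitComp n j :=
  Submodule.subset_span ⟨expVec a b c d, by simpa using hdeg, by simp [mk_monomial_one]⟩

lemma orbitComp_eq_span_top (hn : Odd n) :
    OrbitComp n (2 * n + 2) =
      Submodule.span (ZMod 2) {oδ n ^ ((n - 1) / 2) * oα n ^ 2 * oβ n ^ 2} := by
  refine le_antisymm (orbitComp_le_of_forall n fun a b c d hdeg ↦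
    monomial_mem_span_top_of_degree_eq n hn hdeg) ?_
  rw [Submodule.span_singleton_le_iff_mem, mul_rotate]
  obtain ⟨t, rfl⟩ := hn
  simpa using monomial_mem_orbitComp _ (a := 2) (b := 2) (c := 0) (d := (2 * t + 1 - 1) / 2)
    (by omega)

end OrbitCohomology

end

open OrbitCohomology in
theorem stmt8_general (n : ℕ) (hodd : Odd n) :
    OrbitComp n (2 * n + 2) =
        Submodule.span (ZMod 2)
          {(oδ n) ^ ((n - 1) / 2) * (oα n) ^ 2 * (oβ n) ^ 2} ∧
      Module.finrank (ZMod 2) (OrbitComp n (2 * n + 2)) = 1 ∧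
      OrbitComp n (2 * n + 2) ≠ ⊥ ∧
      ∀ j, 2 * n + 2 < j → OrbitComp n j = ⊥ := by
  have htop := orbitComp_eq_span_top n hodd
  have hne := oδ_pow_mul_oα_sq_mul_oβ_sq_ne_zero n hodd
  refine ⟨htop, ?_, ?_, fun j hj ↦ ?_⟩
  · rw [htop, finrank_span_singleton hne]
  · rwa [htop, Ne, Submodule.span_singleton_eq_bot]
  · refine eq_bot_iff.2 (orbitComp_le_of_forall n fun a b c d hdeg ↦ ?_)
    rw [monomial_eq_zero_of_degree_gt n hodd (hdeg ▸ hj)]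
    exact Submodule.zero_mem _

/-- For `n ≥ 3` odd: the top nonzero degree of the orbit-space cohomology is
`2n+2`, where the degree-`(2n+2)` component is 1-dimensional, spanned by
`δ^((n-1)/2)·α²·β²`. -/
theorem stmt8 (n : ℕ) (hn : 3 ≤ n) (hodd : Odd n) :
    OrbitComp n (2 * n + 2) =
        Submodule.span (ZMod 2)
          {(oδ n) ^ ((n - 1) / 2) * (oα n) ^ 2 * (oβ n) ^ 2} ∧
      Module.finrank (ZMod 2) (OrbitComp n (2 * n + 2)) = 1 ∧
      OrbitComp n (2 * n + 2) ≠ ⊥ ∧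
      ∀ j, 2 * n + 2 < j → OrbitComp n j = ⊥ :=
  stmt8_general n hodd
end

section
/- Let n ≥ 3 be odd and B = (Z/2)[α,β,γ,δ]/⟨α³, β³, γ², β² + βγ, δ^((n+1)/2)⟩. Then for all 0 ≤ i ≤ (n-1)/2 and j ∈ {1,2}, the element δ^i · α^j · β · γ is nonzero in B. -/
open MvPolynomial

-- auxiliary lemmas

noncomputable def fsub : MvPolynomial (Fin 4) (ZMod 2) →ₐ[ZMod 2] MvPolynomial (Fin 4) (ZMod 2) :=
  aeval (fun k : Fin 4 => if k = 2 then X 1 + X 2 else X k)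

lemma fsub_X0 : fsub (X 0) = X 0 := by simp [fsub]
lemma fsub_X1 : fsub (X 1) = X 1 := by simp [fsub]
lemma fsub_X2 : fsub (X 2) = X 1 + X 2 := by simp [fsub]
lemma fsub_X3 : fsub (X 3) = X 3 := by simp [fsub]

lemma X_mul_X_eq (a b : Fin 4) : (X a * X b : MvPolynomial (Fin 4) (ZMod 2)) =
    monomial (Finsupp.single a 1 + Finsupp.single b 1) 1 := by
  rw [← pow_one (X a : MvPolynomial (Fin 4) (ZMod 2)),
    ← pow_one (X b : MvPolynomial (Fin 4) (ZMod 2)), X_pow_eq_monomial, X_pow_eq_monomial,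
    monomial_mul, one_mul]

lemma key (m i j : ℕ) (him : i < m) (hjle : j ≤ 2) :
    (X 3 ^ i * X 0 ^ j * X 1 * X 2 : MvPolynomial (Fin 4) (ZMod 2)) ∉
      Ideal.span {(X 0 : MvPolynomial (Fin 4) (ZMod 2)) ^ 3,
        (X 1) ^ 3, (X 2) ^ 2, (X 1) ^ 2 + (X 1) * (X 2), (X 3) ^ m} := by
  classical
  intro hmem
  set ν : Fin 4 →₀ ℕ := Finsupp.single 3 i + Finsupp.single 0 j with hν
  set μ1 : Fin 4 →₀ ℕ := ν + Finsupp.single 1 2 with hμ1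
  set μ2 : Fin 4 →₀ ℕ := ν + Finsupp.single 2 2 with hμ2
  have e10 : μ1 0 = j := by simp [hμ1, hν, Finsupp.single_apply]
  have e11 : μ1 1 = 2 := by simp [hμ1, hν, Finsupp.single_apply]
  have e12 : μ1 2 = 0 := by simp [hμ1, hν, Finsupp.single_apply]
  have e13 : μ1 3 = i := by simp [hμ1, hν, Finsupp.single_apply]
  have e20 : μ2 0 = j := by simp [hμ2, hν, Finsupp.single_apply]
  have e21 : μ2 1 = 0 := by simp [hμ2, hν, Finsupp.single_apply]
  have e22 : μ2 2 = 2 := by simp [hμ2, hν, Finsupp.single_apply]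
  have e23 : μ2 3 = i := by simp [hμ2, hν, Finsupp.single_apply]
  have notle : ∀ (s μ : Fin 4 →₀ ℕ) (t : Fin 4), μ t < s t → ¬ s ≤ μ :=
    fun s μ t h hle => absurd (hle t) (by omega)
  -- non-divisibility facts
  have n1a : ¬ Finsupp.single (0 : Fin 4) 3 ≤ μ1 :=
    notle _ _ 0 (by rw [e10, Finsupp.single_eq_same]; omega)
  have n1b : ¬ Finsupp.single (0 : Fin 4) 3 ≤ μ2 :=
    notle _ _ 0 (by rw [e20, Finsupp.single_eq_same]; omega)
  have n2a : ¬ Finsupp.single (1 : Fin 4) 3 ≤ μ1 :=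
    notle _ _ 1 (by rw [e11, Finsupp.single_eq_same]; omega)
  have n2b : ¬ Finsupp.single (1 : Fin 4) 3 ≤ μ2 :=
    notle _ _ 1 (by rw [e21, Finsupp.single_eq_same]; omega)
  have n3a : ¬ Finsupp.single (2 : Fin 4) 2 ≤ μ1 :=
    notle _ _ 2 (by rw [e12, Finsupp.single_eq_same]; omega)
  have n3b : ¬ Finsupp.single (1 : Fin 4) 2 ≤ μ2 :=
    notle _ _ 1 (by rw [e21, Finsupp.single_eq_same]; omega)
  have n4a : ¬ Finsupp.single (1 : Fin 4) 1 + Finsupp.single (2 : Fin 4) 1 ≤ μ1 :=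
    notle _ _ 2 (by rw [e12]; simp [Finsupp.single_apply])
  have n4b : ¬ Finsupp.single (1 : Fin 4) 1 + Finsupp.single (2 : Fin 4) 1 ≤ μ2 :=
    notle _ _ 1 (by rw [e21]; simp [Finsupp.single_apply])
  have n5a : ¬ Finsupp.single (3 : Fin 4) m ≤ μ1 :=
    notle _ _ 3 (by rw [e13, Finsupp.single_eq_same]; omega)
  have n5b : ¬ Finsupp.single (3 : Fin 4) m ≤ μ2 :=
    notle _ _ 3 (by rw [e23, Finsupp.single_eq_same]; omega)
  have p1 : Finsupp.single (1 : Fin 4) 2 ≤ μ1 := hμ1 ▸ le_add_self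
  have p2 : Finsupp.single (2 : Fin 4) 2 ≤ μ2 := hμ2 ▸ le_add_self
  have s1 : μ1 - Finsupp.single (1 : Fin 4) 2 = ν := by rw [hμ1, add_tsub_cancel_right]
  have s2 : μ2 - Finsupp.single (2 : Fin 4) 2 = ν := by rw [hμ2, add_tsub_cancel_right]
  have key1 : ∀ p ∈ Ideal.span {(X 0 : MvPolynomial (Fin 4) (ZMod 2)) ^ 3,
        (X 1) ^ 3, (X 2) ^ 2, (X 1) ^ 2 + (X 1) * (X 2), (X 3) ^ m},
      ∀ q : MvPolynomial (Fin 4) (ZMod 2),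
        coeff μ1 (q * fsub p) + coeff μ2 (q * fsub p) = 0 := by
    intro p hp
    induction hp using Submodule.span_induction with
    | mem x hx =>
      intro q
      simp only [Set.mem_insert_iff, Set.mem_singleton_iff] at hx
      rcases hx with rfl | rfl | rfl | rfl | rfl
      · rw [map_pow, fsub_X0, X_pow_eq_monomial, coeff_mul_monomial', coeff_mul_monomial',
          if_neg n1a, if_neg n1b, add_zero]
      · rw [map_pow, fsub_X1, X_pow_eq_monomial, coeff_mul_monomial', coeff_mul_monomial',
          if_neg n2a, if_neg n2b, add_zero]
      · rw [map_pow, fsub_X2, CharTwo.add_sq, mul_add, coeff_add, coeff_add,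
          X_pow_eq_monomial, X_pow_eq_monomial, coeff_mul_monomial', coeff_mul_monomial',
          coeff_mul_monomial', coeff_mul_monomial', if_pos p1, if_neg n3a, if_neg n3b,
          if_pos p2, s1, s2, mul_one]
        rw [add_zero, zero_add, CharTwo.add_self_eq_zero]
      · rw [map_add, map_mul, map_pow, fsub_X1, fsub_X2]
        have h4 : (X 1 : MvPolynomial (Fin 4) (ZMod 2)) ^ 2 + X 1 * (X 1 + X 2) = X 1 * X 2 := by
          rw [mul_add, ← sq, ← add_assoc, CharTwo.add_self_eq_zero, zero_add]
        rw [h4, X_mul_X_eq, coeff_mul_monomial', coeff_mul_monomial', if_neg n4a, if_neg n4b,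
          add_zero]
      · rw [map_pow, fsub_X3, X_pow_eq_monomial, coeff_mul_monomial', coeff_mul_monomial',
          if_neg n5a, if_neg n5b, add_zero]
    | zero => intro q; simp
    | add a b _ _ ha hb =>
        intro q
        rw [map_add, mul_add, coeff_add, coeff_add]
        have h := ha q; have h' := hb q
        linear_combination (norm := ring_nf) h + h'
    | smul a x _ hx =>
        intro q
        rw [smul_eq_mul, map_mul, ← mul_assoc]
        exact hx (q * fsub a)
  have h1 := key1 _ hmem 1
  simp only [one_mul, map_mul, map_pow, fsub_X0, fsub_X1, fsub_X2, fsub_X3] at h1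
  have expand : (X 3 : MvPolynomial (Fin 4) (ZMod 2)) ^ i * X 0 ^ j * X 1 * (X 1 + X 2) =
      monomial μ1 1 + monomial (ν + (Finsupp.single 1 1 + Finsupp.single 2 1)) 1 := by
    rw [mul_add, hμ1, hν]
    congr 1
    · rw [mul_assoc, ← sq, X_pow_eq_monomial, X_pow_eq_monomial, X_pow_eq_monomial,
        monomial_mul, monomial_mul, one_mul, one_mul]
    · rw [mul_assoc, X_mul_X_eq, X_pow_eq_monomial, X_pow_eq_monomial,
        monomial_mul, monomial_mul, one_mul, one_mul, add_assoc]
  rw [expand, coeff_add, coeff_add, coeff_monomial, coeff_monomial, coeff_monomial,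
    coeff_monomial, if_pos rfl] at h1
  have d1 : ν + (Finsupp.single (1:Fin 4) 1 + Finsupp.single (2:Fin 4) 1) ≠ μ1 := by
    intro h
    have := congrArg (fun f : Fin 4 →₀ ℕ => f 2) h
    simp only [hν, hμ1, Finsupp.add_apply, Finsupp.single_apply] at this
    simpa using this
  have d2 : μ1 ≠ μ2 := by
    intro h
    have : μ1 1 = μ2 1 := by rw [h]
    rw [e11, e21] at this; omega
  have d3 : ν + (Finsupp.single (1:Fin 4) 1 + Finsupp.single (2:Fin 4) 1) ≠ μ2 := by
    intro h
    have := congrArg (fun f : Fin 4 →₀ ℕ => f 1) h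
    simp only [hν, hμ2, Finsupp.add_apply, Finsupp.single_apply] at this
    simpa using this
  rw [if_neg d1, if_neg d2, if_neg d3] at h1
  simp at h1


/-- For `n ≥ 3` odd, all the elements `δ^i α^j β γ` with `0 ≤ i ≤ (n-1)/2` and
`j ∈ {1,2}` are nonzero in the orbit-space cohomology ring. -/
theorem stmt10 (n : ℕ) (hn : 3 ≤ n) (hodd : Odd n) :
    ∀ i j : ℕ, i ≤ (n - 1) / 2 → (j = 1 ∨ j = 2) →
      (oδ n) ^ i * (oα n) ^ j * oβ n * oγ n ≠ 0 := by
  intro i j hi hj h0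
  obtain ⟨k, hk⟩ := hodd
  have him : i < (n + 1) / 2 := by omega
  have hjle : j ≤ 2 := by rcases hj with rfl | rfl <;> norm_num
  apply key ((n + 1) / 2) i j him hjle
  rw [← Ideal.Quotient.eq_zero_iff_mem]
  have hmkeq : Ideal.Quotient.mk _ (X 3 ^ i * X 0 ^ j * X 1 * X 2 :
      MvPolynomial (Fin 4) (ZMod 2)) = (oδ n) ^ i * (oα n) ^ j * oβ n * oγ n := by
    simp only [map_mul, map_pow, oδ, oα, oβ, oγ]
  rw [hmkeq, h0]
end
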